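/- arXiv:0708.0390 — 3 statements merged into one kernel-verified Lean document; each statement's English description precedes it below -/
import Mathlib

section
/- Let ρ satisfy (A3), let c > 0, let 0 < ε < b < 1, and let H ∈ V_ε under the Gaussian model. Call a triple (α', θ', σ') feasible if σ' > 0 and ∫ ρ((y − α' − x'θ')/σ') dH(y,x) ≤ b. Suppose (α, θ, σ) is feasible and minimizes L(α', θ', σ') = c ∫ ρ((y − α' − x'θ')/σ') dH(y,x) + log σ' among all feasible triples. Then ‖θ‖ ≤ (exp(2cε + 2D_c(ε)) − 1)^{1/2}. -/
open MeasureTheory ProbabilityTheory Filter Set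
open scoped NNReal ENNReal

/-!
Under the Gaussian model the residual `y - α - xᵀθ` has law `N(-α, T²)` with
`T = √(1 + ‖θ‖²)`. By Anderson's inequality (a centred Gaussian gives the centred interval
the largest mass among all translates) the Gaussian part of the objective at `(α, θ, σ)` is at
least `(1 - ε) g(σ / T)`. Feasibility then gives `g(σ / T) ≤ g(γ_{b,ε})`, hence
`γ_{b,ε} ≤ σ / T`, because `g` can only be constant on an interval if `ρ = 1` almost everywhere;
so the optimal value is at least `inf_{s ≥ γ_{b,ε}} A + log T`. On the other hand, whatever the contamination, every zero-slope
triple `(0, 0, s)` with `s ≥ σ_{b,ε}` is feasible, so the optimal value is at most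
`inf_{s ≥ σ_{b,ε}} A + cε`. Hence `log T ≤ cε + D_c(ε)`.
-/

lemma Function.Even.comp_abs {α β : Type*} [AddGroup α] [LinearOrder α] {f : α → β}
    (hf : f.Even) (x : α) : f |x| = f x := by
  rcases abs_choice x with h | h <;> rw [h]
  exact hf x

lemma Function.Even.le_of_abs_le {α β : Type*} [AddCommGroup α] [LinearOrder α]
    [IsOrderedAddMonoid α] [Preorder β] {f : α → β} (hf : f.Even)
    (hmono : MonotoneOn f (Ici 0)) {x y : α} (h : |x| ≤ |y|) : f x ≤ f y := by
  rw [← hf.comp_abs x, ← hf.comp_abs y]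
  exact hmono (abs_nonneg x) (abs_nonneg y) h

lemma gaussianPDFReal_le_of_abs_le (v : ℝ≥0) {x y : ℝ} (h : |x| ≤ |y|) :
    gaussianPDFReal 0 v y ≤ gaussianPDFReal 0 v x := by
  simp only [gaussianPDFReal_def, sub_zero]
  refine mul_le_mul_of_nonneg_left (Real.exp_le_exp.mpr ?_) (by positivity)
  exact div_le_div_of_nonneg_right (neg_le_neg (sq_le_sq.mpr h)) (by positivity)

lemma gaussianReal_Icc_sub_add_le (v : ℝ≥0) (hv : v ≠ 0) (m : ℝ) {r : ℝ} (hr : 0 ≤ r) :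
    gaussianReal 0 v (Icc (m - r) (m + r)) ≤ gaussianReal 0 v (Icc (-r) r) := by
  set φ := gaussianPDFReal 0 v
  have hint : ∀ a b : ℝ, IntervalIntegrable φ volume a b :=
    fun a b => (integrable_gaussianPDFReal 0 v).intervalIntegrable
  have hIcc : ∀ a b : ℝ, a ≤ b → ∫ x in Icc a b, φ x = ∫ x in a..b, φ x := fun a b hab => by
    rw [integral_Icc_eq_integral_Ioc, intervalIntegral.integral_of_le hab]
  rw [gaussianReal_apply_eq_integral 0 hv, gaussianReal_apply_eq_integral 0 hv,
    hIcc _ _ (by linarith), hIcc _ _ (by linarith)]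
  refine ENNReal.ofReal_le_ofReal (sub_nonpos.mp ?_)
  -- both intervals have length `2r`; what differs is `∫ u in 0..m, φ (u + r) - φ (u - r)`
  have hright : ∫ x in r..m + r, φ x = ∫ u in 0..m, φ (u + r) := by
    rw [intervalIntegral.integral_comp_add_right, zero_add]
  have hleft : ∫ x in -r..m - r, φ x = ∫ u in 0..m, φ (u - r) := by
    rw [intervalIntegral.integral_comp_sub_right, zero_sub]
  rw [intervalIntegral.integral_interval_sub_interval_comm' (hint _ _) (hint _ _) (hint _ _),
    sub_nonpos, hright, hleft]
  have hint_add : IntervalIntegrable (fun u => φ (u + r)) volume 0 m :=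
    ((integrable_gaussianPDFReal 0 v).comp_add_right r).intervalIntegrable
  have hint_sub : IntervalIntegrable (fun u => φ (u - r)) volume 0 m :=
    ((integrable_gaussianPDFReal 0 v).comp_sub_right r).intervalIntegrable
  rcases le_total 0 m with hm | hm
  · refine intervalIntegral.integral_mono_on hm hint_add hint_sub fun u hu => ?_
    apply gaussianPDFReal_le_of_abs_le v
    rw [abs_of_nonneg (by linarith [hu.1] : 0 ≤ u + r)]
    exact abs_le.mpr ⟨by linarith [hu.1], by linarith⟩
  · rw [intervalIntegral.integral_symm, intervalIntegral.integral_symm m, neg_le_neg_iff]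
    refine intervalIntegral.integral_mono_on hm hint_sub.symm hint_add.symm fun u hu => ?_
    apply gaussianPDFReal_le_of_abs_le v
    rw [abs_of_nonpos (by linarith [hu.2] : u - r ≤ 0)]
    exact abs_le.mpr ⟨by linarith, by linarith [hu.2]⟩

lemma gaussianReal_setOf_lt_le_comp_sub {f : ℝ → ℝ} (hf_even : f.Even)
    (hf_mono : MonotoneOn f (Ici 0)) (v : ℝ≥0) (hv : v ≠ 0) (m t : ℝ) :
    gaussianReal 0 v {u | t < f u} ≤ gaussianReal 0 v {u | t < f (u - m)} := by
  have := nullSingletonClass_gaussianReal (μ := 0) hv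
  set W := {w : ℝ | 0 ≤ w ∧ t < f w}
  have habs_mem : ∀ {u}, t < f u → |u| ∈ W := fun hu => ⟨abs_nonneg _, by rwa [hf_even.comp_abs]⟩
  rcases W.eq_empty_or_nonempty with hW | hW
  · have : {u | t < f u} = ∅ := eq_empty_of_forall_notMem fun u hu => by
      simpa [hW] using habs_mem hu
    simp [this]
  -- the superlevel sets of `f` lie between `{r < |u|}` and `{r ≤ |u|}`
  set r := sInf W
  have hr : 0 ≤ r := le_csInf hW fun w hw => hw.1
  have hsub : {u | t < f u} ⊆ (Ioo (-r) r)ᶜ := fun u hu hmem =>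
    (abs_lt.mpr hmem).not_ge (csInf_le ⟨0, fun w hw => hw.1⟩ (habs_mem hu))
  have hsup : (Icc (m - r) (m + r))ᶜ ⊆ {u | t < f (u - m)} := fun u hu => by
    have hlt : r < |u - m| := by
      by_contra! h
      exact hu ⟨by linarith [neg_abs_le (u - m)], by linarith [le_abs_self (u - m)]⟩
    obtain ⟨w, hwW, hw⟩ := exists_lt_of_csInf_lt hW hlt
    exact hwW.2.trans_le (hf_mono hwW.1 (abs_nonneg (u - m)) hw.le |>.trans_eq (hf_even.comp_abs _))
  calc gaussianReal 0 v {u | t < f u} ≤ gaussianReal 0 v (Ioo (-r) r)ᶜ := measure_mono hsub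
    _ = 1 - gaussianReal 0 v (Icc (-r) r) := by
      rw [prob_compl_eq_one_sub measurableSet_Ioo, measure_congr Ioo_ae_eq_Icc]
    _ ≤ 1 - gaussianReal 0 v (Icc (m - r) (m + r)) :=
      tsub_le_tsub_left (gaussianReal_Icc_sub_add_le v hv m hr) 1
    _ = gaussianReal 0 v (Icc (m - r) (m + r))ᶜ := (prob_compl_eq_one_sub measurableSet_Icc).symm
    _ ≤ gaussianReal 0 v {u | t < f (u - m)} := measure_mono hsup

theorem integral_le_integral_comp_sub_gaussianReal {f : ℝ → ℝ} (hf_meas : Measurable f)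
    (hf_even : f.Even) (hf_mono : MonotoneOn f (Ici 0)) (hf_nonneg : ∀ u, 0 ≤ f u)
    (v : ℝ≥0) (hv : v ≠ 0) (m : ℝ) (hf_int : Integrable (fun u => f (u - m)) (gaussianReal 0 v)) :
    ∫ u, f u ∂(gaussianReal 0 v) ≤ ∫ u, f (u - m) ∂(gaussianReal 0 v) := by
  have hf_meas' : Measurable fun u => f (u - m) := hf_meas.comp (measurable_id.sub_const m)
  rw [integral_eq_lintegral_of_nonneg_ae (ae_of_all _ hf_nonneg) hf_meas.aestronglyMeasurable,
    integral_eq_lintegral_of_nonneg_ae (f := fun u => f (u - m)) (ae_of_all _ fun u => hf_nonneg _)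
      hf_meas'.aestronglyMeasurable]
  refine ENNReal.toReal_mono hf_int.lintegral_lt_top.ne ?_
  rw [lintegral_eq_lintegral_meas_lt _ (ae_of_all _ hf_nonneg) hf_meas.aemeasurable,
    lintegral_eq_lintegral_meas_lt _ (ae_of_all _ fun u => hf_nonneg _) hf_meas'.aemeasurable]
  exact lintegral_mono fun t => gaussianReal_setOf_lt_le_comp_sub hf_even hf_mono v hv m t

lemma map_pi_sum_gaussianReal {ι : Type*} [Fintype ι] (m : ι → ℝ) (v : ι → ℝ≥0) :
    (Measure.pi fun i => gaussianReal (m i) (v i)).map (fun x => ∑ i, x i) =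
      gaussianReal (∑ i, m i) (∑ i, v i) := by
  refine Measure.ext_of_charFun ?_
  rw [charFun_map_sum_pi_eq_prod]
  ext t
  simp only [Finset.prod_apply, charFun_gaussianReal, ← Complex.exp_sum]
  push_cast
  rw [Finset.sum_sub_distrib, ← Finset.sum_div, ← Finset.sum_mul, ← Finset.sum_mul, Finset.mul_sum]

lemma map_pi_sum_mul_gaussianReal {ι : Type*} [Fintype ι] (a : ι → ℝ) :
    (Measure.pi fun _ : ι => gaussianReal 0 1).map (fun x => ∑ i, a i * x i) =
      gaussianReal 0 (∑ i, a i ^ 2).toNNReal := by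
  have hcomp : (fun x : ι → ℝ => ∑ i, a i * x i) =
      (fun y : ι → ℝ => ∑ i, y i) ∘ (fun x i => a i * x i) := rfl
  rw [hcomp, ← Measure.map_map (by fun_prop) (by fun_prop),
    Measure.pi_map_pi fun i => (measurable_const_mul (a i)).aemeasurable]
  simp only [gaussianReal_map_const_mul, mul_zero, mul_one]
  rw [map_pi_sum_gaussianReal, Finset.sum_const_zero]
  congr 1
  ext
  simp [Real.toNNReal_of_nonneg (by positivity : 0 ≤ ∑ i, a i ^ 2)]

noncomputable abbrev gaussianModel (ι : Type*) [Fintype ι] : Measure (ℝ × (ι → ℝ)) :=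
  (gaussianReal 0 1).prod (Measure.pi fun _ : ι => gaussianReal 0 1)

lemma map_sub_sum_mul_gaussianModel {ι : Type*} [Fintype ι] (θ : ι → ℝ) :
    (gaussianModel ι).map (fun yx => yx.1 - ∑ i, θ i * yx.2 i) =
      gaussianReal 0 (1 + ∑ i, θ i ^ 2).toNNReal := by
  have hcomp : (fun yx : ℝ × (ι → ℝ) => yx.1 - ∑ i, θ i * yx.2 i) =
      (fun q : ℝ × ℝ => q.1 + q.2) ∘ Prod.map id (fun x : ι → ℝ => ∑ i, -θ i * x i) := by
    ext yx
    simp [sub_eq_add_neg]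
  rw [hcomp, ← Measure.map_map (by fun_prop) (by fun_prop),
    ← Measure.map_prod_map _ _ (by fun_prop) (by fun_prop), Measure.map_id,
    map_pi_sum_mul_gaussianReal]
  change gaussianReal 0 1 ∗ _ = _
  rw [gaussianReal_conv_gaussianReal, add_zero]
  congr 1
  ext
  simp [Real.toNNReal_of_nonneg, Finset.sum_nonneg, sq_nonneg]

lemma integral_comp_sub_sum_mul_gaussianModel {ι : Type*} [Fintype ι] (α : ℝ) (θ : ι → ℝ)
    {f : ℝ → ℝ} (hf : Measurable f) :
    ∫ yx, f (yx.1 - α - ∑ i, θ i * yx.2 i) ∂(gaussianModel ι) =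
      ∫ z, f (√(1 + ∑ i, θ i ^ 2) * z - α) ∂(gaussianReal 0 1) := by
  have hnn : 0 ≤ 1 + ∑ i, θ i ^ 2 := by positivity
  have hscale : (gaussianReal 0 1).map (√(1 + ∑ i, θ i ^ 2) * ·) =
      gaussianReal 0 (1 + ∑ i, θ i ^ 2).toNNReal := by
    rw [gaussianReal_map_const_mul, mul_zero, mul_one]
    congr 1
    ext
    simp [Real.sq_sqrt hnn, hnn]
  have hfα : Measurable fun w => f (w - α) := hf.comp (measurable_id.sub_const α)
  simp_rw [sub_right_comm _ α]
  rw [← integral_map (f := fun w => f (w - α)) (by fun_prop) hfα.aestronglyMeasurable,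
    map_sub_sum_mul_gaussianModel, ← hscale,
    integral_map (by fun_prop) hfα.aestronglyMeasurable]

lemma integrable_of_nonneg_of_le_one {E : Type*} [MeasurableSpace E] {μ : Measure E}
    [IsFiniteMeasure μ] {f : E → ℝ} (hf : Measurable f) (hf_bdd : ∀ x, 0 ≤ f x ∧ f x ≤ 1) :
    Integrable f μ :=
  .of_bound hf.aestronglyMeasurable 1 <| ae_of_all _ fun x => by
    rw [Real.norm_eq_abs, abs_of_nonneg (hf_bdd x).1]
    exact (hf_bdd x).2

lemma integral_mixture_bounds {E : Type*} [MeasurableSpace E] {μ ν : Measure E}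
    [IsFiniteMeasure μ] [IsProbabilityMeasure ν] {ε : ℝ} (hε0 : 0 ≤ ε) (hε1 : ε ≤ 1)
    {f : E → ℝ} (hf : Measurable f) (hf_bdd : ∀ x, 0 ≤ f x ∧ f x ≤ 1) :
    (1 - ε) * ∫ x, f x ∂μ ≤ ∫ x, f x ∂(ENNReal.ofReal (1 - ε) • μ + ENNReal.ofReal ε • ν) ∧
      ∫ x, f x ∂(ENNReal.ofReal (1 - ε) • μ + ENNReal.ofReal ε • ν) ≤
        (1 - ε) * ∫ x, f x ∂μ + ε := by
  have hint : ∀ κ : Measure E, [IsFiniteMeasure κ] → Integrable f κ := fun _ _ =>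
    integrable_of_nonneg_of_le_one hf hf_bdd
  rw [integral_add_measure ((hint μ).smul_measure ENNReal.ofReal_ne_top)
      ((hint ν).smul_measure ENNReal.ofReal_ne_top), integral_smul_measure,
    integral_smul_measure, ENNReal.toReal_ofReal (by linarith), ENNReal.toReal_ofReal hε0,
    smul_eq_mul, smul_eq_mul]
  have hν0 : 0 ≤ ∫ x, f x ∂ν := integral_nonneg fun x => (hf_bdd x).1
  have hν1 : ∫ x, f x ∂ν ≤ 1 := by
    simpa using integral_mono (hint ν) (integrable_const 1) fun x => (hf_bdd x).2
  constructor <;> nlinarith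

lemma ae_volume_comp_const_mul {P : ℝ → Prop} (h : ∀ᵐ u ∂volume, P u) {a : ℝ} (ha : a ≠ 0) :
    ∀ᵐ u ∂volume, P (a * u) :=
  (Measure.quasiMeasurePreserving_smul volume ha).ae h

noncomputable def gaussianRhoMean (ρ : ℝ → ℝ) (s : ℝ) : ℝ := ∫ z, ρ (z / s) ∂(gaussianReal 0 1)

section gaussianRhoMean

variable {ρ : ℝ → ℝ}

lemma comp_div_le_comp_div (hρ_even : ρ.Even) (hρ_mono : MonotoneOn ρ (Ici 0)) {s₁ s₂ : ℝ}
    (hs₁ : 0 < s₁) (h12 : s₁ ≤ s₂) (z : ℝ) : ρ (z / s₂) ≤ ρ (z / s₁) :=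
  hρ_even.le_of_abs_le hρ_mono <| by
    rw [abs_div, abs_div, abs_of_pos hs₁, abs_of_pos (hs₁.trans_le h12)]
    exact div_le_div_of_nonneg_left (abs_nonneg z) hs₁ h12

lemma integrable_comp_div (hρ_meas : Measurable ρ) (hρ_bdd : ∀ u, 0 ≤ ρ u ∧ ρ u ≤ 1)
    (μ : Measure ℝ) [IsFiniteMeasure μ] (s : ℝ) : Integrable (fun z => ρ (z / s)) μ :=
  integrable_of_nonneg_of_le_one (hρ_meas.comp (measurable_id.div_const s)) fun _ => hρ_bdd _

lemma gaussianRhoMean_nonneg (hρ_nonneg : ∀ u, 0 ≤ ρ u) (s : ℝ) : 0 ≤ gaussianRhoMean ρ s :=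
  integral_nonneg fun _ => hρ_nonneg _

lemma gaussianRhoMean_antitoneOn (hρ_meas : Measurable ρ) (hρ_even : ρ.Even)
    (hρ_mono : MonotoneOn ρ (Ici 0)) (hρ_bdd : ∀ u, 0 ≤ ρ u ∧ ρ u ≤ 1) :
    AntitoneOn (gaussianRhoMean ρ) (Ioi 0) := fun s₁ hs₁ s₂ _ h12 =>
  integral_mono (integrable_comp_div hρ_meas hρ_bdd _ s₂) (integrable_comp_div hρ_meas hρ_bdd _ s₁)
    (comp_div_le_comp_div hρ_even hρ_mono hs₁ h12)

lemma gaussianRhoMean_eq_one_of_ae_eq_one (h : ∀ᵐ u ∂volume, ρ u = 1) {s : ℝ} (hs : s ≠ 0) :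
    gaussianRhoMean ρ s = 1 := by
  have hdiv : ∀ᵐ z ∂volume, ρ (z / s) = 1 := by
    filter_upwards [ae_volume_comp_const_mul h (inv_ne_zero hs)] with z hz
    rwa [inv_mul_eq_div] at hz
  rw [gaussianRhoMean, integral_congr_ae
    ((gaussianReal_absolutelyContinuous 0 one_ne_zero).ae_le hdiv)]
  simp

lemma ae_comp_mul_eq_of_gaussianRhoMean_eq (hρ_meas : Measurable ρ) (hρ_even : ρ.Even)
    (hρ_mono : MonotoneOn ρ (Ici 0)) (hρ_bdd : ∀ u, 0 ≤ ρ u ∧ ρ u ≤ 1) {s₁ s₂ : ℝ}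
    (hs₁ : 0 < s₁) (h12 : s₁ ≤ s₂) (heq : gaussianRhoMean ρ s₁ = gaussianRhoMean ρ s₂) :
    ∀ᵐ u ∂volume, ρ (s₂ / s₁ * u) = ρ u := by
  have hs₂ : s₂ ≠ 0 := (hs₁.trans_le h12).ne'
  have hint := integrable_comp_div hρ_meas hρ_bdd (gaussianReal 0 1)
  have hgauss : (fun z => ρ (z / s₁) - ρ (z / s₂)) =ᵐ[gaussianReal 0 1] 0 := by
    refine (integral_eq_zero_iff_of_nonneg
      (fun z => sub_nonneg.mpr (comp_div_le_comp_div hρ_even hρ_mono hs₁ h12 z))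
      ((hint s₁).sub (hint s₂))).mp ?_
    rw [integral_sub (hint s₁) (hint s₂), ← gaussianRhoMean, ← gaussianRhoMean, heq, sub_self]
  filter_upwards [ae_volume_comp_const_mul
    ((gaussianReal_absolutelyContinuous' 0 one_ne_zero).ae_le hgauss) hs₂] with u hu
  rw [Pi.zero_apply, sub_eq_zero, mul_div_cancel_left₀ u hs₂] at hu
  rwa [div_mul_eq_mul_div]

lemma ae_eq_one_of_ae_comp_mul_eq (hρ_even : ρ.Even) (hρ_lim : Tendsto ρ atTop (nhds 1))
    {c : ℝ} (hc : 1 < c) (h : ∀ᵐ u ∂volume, ρ (c * u) = ρ u) : ∀ᵐ u ∂volume, ρ u = 1 := by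
  have hpow : ∀ n : ℕ, ∀ᵐ u ∂volume, ρ (c ^ (n + 1) * u) = ρ (c ^ n * u) := fun n => by
    filter_upwards [ae_volume_comp_const_mul h (pow_ne_zero n (by positivity))] with u hu
    rwa [← mul_assoc, ← pow_succ'] at hu
  filter_upwards [ae_all_iff.mpr hpow, volume.ae_ne 0] with u hu hu0
  have hconst : ∀ n : ℕ, ρ (c ^ n * |u|) = ρ u := fun n => by
    rw [← abs_of_pos (pow_pos (zero_lt_one.trans hc) n), ← abs_mul, hρ_even.comp_abs]
    induction n with
    | zero => simp
    | succ n ih => rw [hu n, ih]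
  have hlim : Tendsto (fun n : ℕ => ρ (c ^ n * |u|)) atTop (nhds 1) :=
    hρ_lim.comp ((tendsto_pow_atTop_atTop_of_one_lt hc).atTop_mul_const (abs_pos.mpr hu0))
  simp_rw [hconst] at hlim
  exact tendsto_nhds_unique tendsto_const_nhds hlim

lemma le_of_gaussianRhoMean_le (hρ_meas : Measurable ρ) (hρ_even : ρ.Even)
    (hρ_mono : MonotoneOn ρ (Ici 0)) (hρ_bdd : ∀ u, 0 ≤ ρ u ∧ ρ u ≤ 1)
    (hρ_lim : Tendsto ρ atTop (nhds 1)) {s₀ s γ : ℝ} (hs₀ : s₀ ≠ 0)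
    (hlt : gaussianRhoMean ρ s₀ < 1) (hs : 0 < s)
    (hle : gaussianRhoMean ρ s ≤ gaussianRhoMean ρ γ) : γ ≤ s := by
  by_contra! hsγ
  have heq : gaussianRhoMean ρ s = gaussianRhoMean ρ γ := le_antisymm hle
    (gaussianRhoMean_antitoneOn hρ_meas hρ_even hρ_mono hρ_bdd hs (hs.trans hsγ) hsγ.le)
  have hone := ae_eq_one_of_ae_comp_mul_eq hρ_even hρ_lim ((one_lt_div hs).mpr hsγ)
    (ae_comp_mul_eq_of_gaussianRhoMean_eq hρ_meas hρ_even hρ_mono hρ_bdd hs hsγ.le heq)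
  exact hlt.ne (gaussianRhoMean_eq_one_of_ae_eq_one hone hs₀)

end gaussianRhoMean

lemma gaussianRhoMean_le_integral_gaussianModel {ι : Type*} [Fintype ι] {ρ : ℝ → ℝ}
    (hρ_meas : Measurable ρ) (hρ_even : ρ.Even) (hρ_mono : MonotoneOn ρ (Ici 0))
    (hρ_bdd : ∀ u, 0 ≤ ρ u ∧ ρ u ≤ 1) (α : ℝ) (θ : ι → ℝ) {σ : ℝ} (hσ : 0 < σ) :
    gaussianRhoMean ρ (σ / √(1 + ∑ i, θ i ^ 2)) ≤
      ∫ yx, ρ ((yx.1 - α - ∑ i, θ i * yx.2 i) / σ) ∂(gaussianModel ι) := by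
  set T := √(1 + ∑ i, θ i ^ 2)
  have hT : 0 < T := Real.sqrt_pos.mpr (by positivity)
  set f : ℝ → ℝ := fun z => ρ (z / (σ / T))
  have hf_meas : Measurable f := hρ_meas.comp (measurable_id.div_const _)
  have hf_even : f.Even := fun z => by simp only [f, neg_div, hρ_even (z / (σ / T))]
  have hf_mono : MonotoneOn f (Ici 0) := fun x (hx : 0 ≤ x) y (hy : 0 ≤ y) hxy =>
    hρ_mono (div_nonneg hx (by positivity)) (div_nonneg hy (by positivity))
      (div_le_div_of_nonneg_right hxy (by positivity))
  have hshift : ∀ z, ρ ((T * z - α) / σ) = f (z - α / T) := fun z => by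
    simp only [f]
    congr 1
    field_simp
  rw [integral_comp_sub_sum_mul_gaussianModel α θ (f := fun w => ρ (w / σ))
    (hρ_meas.comp (measurable_id.div_const σ))]
  refine (integral_le_integral_comp_sub_gaussianReal hf_meas hf_even hf_mono
    (fun z => (hρ_bdd _).1) 1 one_ne_zero (α / T)
    (integrable_of_nonneg_of_le_one (hf_meas.comp (measurable_id.sub_const _))
      fun _ => hρ_bdd _)).trans_eq (integral_congr_ae (ae_of_all _ fun z => (hshift z).symm))

lemma mul_gaussianRhoMean_le_integral_of_mixture {ι : Type*} [Fintype ι] {ρ : ℝ → ℝ}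
    (hρ_meas : Measurable ρ) (hρ_even : ρ.Even) (hρ_mono : MonotoneOn ρ (Ici 0))
    (hρ_bdd : ∀ u, 0 ≤ ρ u ∧ ρ u ≤ 1) {ε : ℝ} (hε0 : 0 ≤ ε) (hε1 : ε ≤ 1)
    {ν H : Measure (ℝ × (ι → ℝ))} [IsProbabilityMeasure ν]
    (hH : H = ENNReal.ofReal (1 - ε) • gaussianModel ι + ENNReal.ofReal ε • ν)
    (α : ℝ) (θ : ι → ℝ) {σ : ℝ} (hσ : 0 < σ) :
    (1 - ε) * gaussianRhoMean ρ (σ / √(1 + ∑ i, θ i ^ 2)) ≤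
      ∫ yx, ρ ((yx.1 - α - ∑ i, θ i * yx.2 i) / σ) ∂H := by
  rw [hH]
  exact (mul_le_mul_of_nonneg_left
    (gaussianRhoMean_le_integral_gaussianModel hρ_meas hρ_even hρ_mono hρ_bdd α θ hσ)
    (by linarith)).trans
    (integral_mixture_bounds hε0 hε1 (hρ_meas.comp (by fun_prop)) fun _ => hρ_bdd _).1

lemma integral_fst_le_of_mixture {ι : Type*} [Fintype ι] {ρ : ℝ → ℝ}
    (hρ_meas : Measurable ρ) (hρ_bdd : ∀ u, 0 ≤ ρ u ∧ ρ u ≤ 1) {ε : ℝ} (hε0 : 0 ≤ ε)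
    (hε1 : ε ≤ 1) {ν H : Measure (ℝ × (ι → ℝ))} [IsProbabilityMeasure ν]
    (hH : H = ENNReal.ofReal (1 - ε) • gaussianModel ι + ENNReal.ofReal ε • ν) (s : ℝ) :
    ∫ yx, ρ (yx.1 / s) ∂H ≤ (1 - ε) * gaussianRhoMean ρ s + ε := by
  have hmodel : ∫ yx, ρ (yx.1 / s) ∂(gaussianModel ι) = gaussianRhoMean ρ s := by
    rw [gaussianModel, integral_fun_fst (fun y => ρ (y / s)), probReal_univ, one_smul,
      gaussianRhoMean]
  rw [hH, ← hmodel]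
  exact (integral_mixture_bounds hε0 hε1 (hρ_meas.comp (by fun_prop)) fun _ => hρ_bdd _).2

lemma le_add_sInf_sub_sInf {A : ℝ → ℝ} {γ σ₀ s₀ x L δ : ℝ} (hbdd : BddBelow (A '' Ici γ))
    (hs₀ : γ ≤ s₀) (hlow : A s₀ + x ≤ L) (hup : ∀ s, σ₀ ≤ s → L ≤ A s + δ) :
    x ≤ δ + (sInf (A '' Ici σ₀) - sInf (A '' Ici γ)) := by
  have h₁ : sInf (A '' Ici γ) ≤ A s₀ := csInf_le hbdd (mem_image_of_mem A hs₀)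
  have h₂ : L - δ ≤ sInf (A '' Ici σ₀) := le_csInf ((nonempty_Ici).image A) <| by
    rintro _ ⟨s, hs, rfl⟩
    linarith [hup s hs]
  linarith

lemma bddBelow_image_Ici_of_log_le {A : ℝ → ℝ} {γ : ℝ} (hγ : 0 < γ)
    (hA : ∀ s, γ ≤ s → Real.log s ≤ A s) : BddBelow (A '' Ici γ) :=
  ⟨Real.log γ, by
    rintro _ ⟨s, hs, rfl⟩
    exact (Real.log_le_log hγ hs).trans (hA s hs)⟩

lemma sqrt_le_sqrt_exp_of_log_sqrt_le {x y : ℝ} (hx : 0 ≤ x) (h : Real.log √(1 + x) ≤ y) :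
    √x ≤ √(Real.exp (2 * y) - 1) := by
  rw [Real.log_le_iff_le_exp (Real.sqrt_pos.mpr (by positivity))] at h
  refine Real.sqrt_le_sqrt ?_
  have := pow_le_pow_left₀ (Real.sqrt_nonneg _) h 2
  rw [Real.sq_sqrt (by positivity), ← Real.exp_nat_mul] at this
  push_cast at this
  linarith

theorem stmt7_general (p : ℕ) (ρ : ℝ → ℝ)
    (hρ_meas : Measurable ρ)
    (hρ_even : ∀ u, ρ (-u) = ρ u)
    (hρ_mono : MonotoneOn ρ (Set.Ici 0))
    (hρ_bdd : ∀ u, 0 ≤ ρ u ∧ ρ u ≤ 1)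
    (hρ_lim : Tendsto ρ atTop (nhds 1))
    (g : ℝ → ℝ)
    (hg : ∀ s, 0 < s → g s = ∫ z, ρ (z / s) ∂(gaussianReal 0 1))
    (c : ℝ) (hc : 0 < c)
    (b ε : ℝ) (hε : 0 < ε) (hεb : ε < b) (hb : b < 1)
    (σbε γbε : ℝ) (hσ_pos : 0 < σbε) (hγ_pos : 0 < γbε)
    (hσ : g σbε = (b - ε) / (1 - ε)) (hγ : g γbε = b / (1 - ε))
    (A : ℝ → ℝ) (hA : ∀ s, A s = c * (1 - ε) * g s + Real.log s)
    (D : ℝ) (hD : D = sInf (A '' Set.Ici σbε) - sInf (A '' Set.Ici γbε))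
    (Hstar : Measure (ℝ × (Fin p → ℝ))) (hHstar : IsProbabilityMeasure Hstar)
    (H : Measure (ℝ × (Fin p → ℝ)))
    (hH : H = ENNReal.ofReal (1 - ε) •
        ((gaussianReal 0 1).prod (Measure.pi fun _ : Fin p => gaussianReal 0 1)) +
        ENNReal.ofReal ε • Hstar)
    (α : ℝ) (θ : Fin p → ℝ) (σ : ℝ) (hσpos : 0 < σ)
    -- (α, θ, σ) is feasible:
    (hfeas : ∫ yx, ρ ((yx.1 - α - ∑ i, θ i * yx.2 i) / σ) ∂H ≤ b)
    -- and minimizes L among feasible triples: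
    (hmin : ∀ α' : ℝ, ∀ θ' : Fin p → ℝ, ∀ σ' : ℝ, 0 < σ' →
        (∫ yx, ρ ((yx.1 - α' - ∑ i, θ' i * yx.2 i) / σ') ∂H ≤ b) →
        c * ∫ yx, ρ ((yx.1 - α - ∑ i, θ i * yx.2 i) / σ) ∂H + Real.log σ ≤
        c * ∫ yx, ρ ((yx.1 - α' - ∑ i, θ' i * yx.2 i) / σ') ∂H + Real.log σ') :
    Real.sqrt (∑ i, θ i ^ 2) ≤ Real.sqrt (Real.exp (2 * c * ε + 2 * D) - 1) := by
  have h1ε : 0 < 1 - ε := by linarith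
  have hε1 : ε ≤ 1 := by linarith
  have hg' : ∀ s, 0 < s → g s = gaussianRhoMean ρ s := hg
  have hgA : ∀ s, 0 < s → A s = c * (1 - ε) * gaussianRhoMean ρ s + Real.log s := fun s hs => by
    rw [hA, hg' s hs]
  set L := c * ∫ yx, ρ ((yx.1 - α - ∑ i, θ i * yx.2 i) / σ) ∂H + Real.log σ
  set T := √(1 + ∑ i, θ i ^ 2)
  have hT : 0 < T := Real.sqrt_pos.mpr (by positivity)
  have hσT : 0 < σ / T := div_pos hσpos hT
  have hgauss := mul_gaussianRhoMean_le_integral_of_mixture hρ_meas hρ_even hρ_mono hρ_bdd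
    hε.le hε1 hH α θ hσpos
  have hγT : γbε ≤ σ / T := by
    refine le_of_gaussianRhoMean_le hρ_meas hρ_even hρ_mono hρ_bdd hρ_lim hσ_pos.ne' ?_ hσT ?_
    · rw [← hg' _ hσ_pos, hσ, div_lt_one h1ε]; linarith
    · rw [← hg' _ hγ_pos, hγ, le_div_iff₀ h1ε]; linarith
  have hlow : A (σ / T) + Real.log T ≤ L := by
    rw [hgA _ hσT, Real.log_div hσpos.ne' hT.ne']
    nlinarith
  have hup : ∀ s, σbε ≤ s → L ≤ A s + c * ε := by
    intro s hs
    have hs0 := hσ_pos.trans_le hs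
    have hHs := integral_fst_le_of_mixture hρ_meas hρ_bdd hε.le hε1 hH s
    have hgs := gaussianRhoMean_antitoneOn hρ_meas hρ_even hρ_mono hρ_bdd hσ_pos hs0 hs
    rw [← hg' _ hσ_pos, hσ, le_div_iff₀ h1ε] at hgs
    have hmin0 := hmin 0 0 s hs0
    simp only [sub_zero, Pi.zero_apply, zero_mul, Finset.sum_const_zero] at hmin0
    rw [hgA s hs0]
    nlinarith [hmin0 (by nlinarith)]
  have hbdd : BddBelow (A '' Ici γbε) := bddBelow_image_Ici_of_log_le hγ_pos fun s hs => by
    rw [hgA s (hγ_pos.trans_le hs)]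
    exact le_add_of_nonneg_left (mul_nonneg (mul_nonneg hc.le h1ε.le)
      (gaussianRhoMean_nonneg (fun u => (hρ_bdd u).1) s))
  have hlog : Real.log T ≤ c * ε + D := hD ▸ le_add_sInf_sub_sInf hbdd hγT hlow hup
  rw [show 2 * c * ε + 2 * D = 2 * (c * ε + D) by ring]
  exact sqrt_le_sqrt_exp_of_log_sqrt_le (by positivity) hlog

/-- Under the Gaussian model, the slope θ of any CM-estimate solution over
H ∈ V_ε satisfies ‖θ‖ ≤ (exp(2cε + 2D_c(ε)) − 1)^{1/2}. -/
theorem stmt7 (p : ℕ) (hp : 1 ≤ p) (ρ : ℝ → ℝ)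
    (hρ_meas : Measurable ρ)
    (hρ_even : ∀ u, ρ (-u) = ρ u)
    (hρ_mono : MonotoneOn ρ (Set.Ici 0))
    (hρ_zero : ρ 0 = 0)
    (hρ_bdd : ∀ u, 0 ≤ ρ u ∧ ρ u ≤ 1)
    (hρ_lim : Tendsto ρ atTop (nhds 1))
    (g : ℝ → ℝ)
    (hg : ∀ s, 0 < s → g s = ∫ z, ρ (z / s) ∂(gaussianReal 0 1))
    (c : ℝ) (hc : 0 < c)
    (b ε : ℝ) (hε : 0 < ε) (hεb : ε < b) (hb : b < 1)
    (σbε γbε : ℝ) (hσ_pos : 0 < σbε) (hγ_pos : 0 < γbε)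
    (hσ : g σbε = (b - ε) / (1 - ε)) (hγ : g γbε = b / (1 - ε))
    (A : ℝ → ℝ) (hA : ∀ s, A s = c * (1 - ε) * g s + Real.log s)
    (D : ℝ) (hD : D = sInf (A '' Set.Ici σbε) - sInf (A '' Set.Ici γbε))
    (Hstar : Measure (ℝ × (Fin p → ℝ))) (hHstar : IsProbabilityMeasure Hstar)
    (H : Measure (ℝ × (Fin p → ℝ)))
    (hH : H = ENNReal.ofReal (1 - ε) •
        ((gaussianReal 0 1).prod (Measure.pi fun _ : Fin p => gaussianReal 0 1)) +
        ENNReal.ofReal ε • Hstar)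
    (α : ℝ) (θ : Fin p → ℝ) (σ : ℝ) (hσpos : 0 < σ)
    -- (α, θ, σ) is feasible:
    (hfeas : ∫ yx, ρ ((yx.1 - α - ∑ i, θ i * yx.2 i) / σ) ∂H ≤ b)
    -- and minimizes L among feasible triples:
    (hmin : ∀ α' : ℝ, ∀ θ' : Fin p → ℝ, ∀ σ' : ℝ, 0 < σ' →
        (∫ yx, ρ ((yx.1 - α' - ∑ i, θ' i * yx.2 i) / σ') ∂H ≤ b) →
        c * ∫ yx, ρ ((yx.1 - α - ∑ i, θ i * yx.2 i) / σ) ∂H + Real.log σ ≤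
        c * ∫ yx, ρ ((yx.1 - α' - ∑ i, θ' i * yx.2 i) / σ') ∂H + Real.log σ') :
    Real.sqrt (∑ i, θ i ^ 2) ≤ Real.sqrt (Real.exp (2 * c * ε + 2 * D) - 1) :=
  stmt7_general p ρ hρ_meas hρ_even hρ_mono hρ_bdd hρ_lim g hg c hc b ε hε hεb hb σbε γbε hσ_pos
    hγ_pos hσ hγ A hA D hD Hstar hHstar H hH α θ σ hσpos hfeas hmin
end

section
/- Let ρ satisfy (A3), suppose g satisfies (A4), let 0 < b < 1, and assume g(σ_M) ≤ b (equivalently σ_{b,0} ≤ σ_M, where σ_{b,0} = γ_{b,0} = g⁻¹(b)). Then for every ε ∈ (0, b), c(ε) := ε⁻¹ log(σ_{b,ε}/γ_{b,ε}) satisfies c(ε) ≥ (1−b)/K + b/φ(γ_{b,0}) ≥ 1/K; in particular c_o := inf{c(ε) : 0 < ε < b} ≥ (1−b)/K + b/φ(γ_{b,0}). -/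
open MeasureTheory ProbabilityTheory Filter Set

/-!
On `(0, ∞)` the function `C log s + g s` has derivative `(C - φ s) / s`, so wherever `φ ≤ C`
the drop `g a - g c` is at most `C log (c / a)`. The points satisfy `γ_{b,ε} < γ_{b,0} < σ_{b,ε}`,
and the drops of `g` over the two pieces are `ε b / (1 - ε)` and `ε (1 - b) / (1 - ε)`.
Since `γ_{b,0} ≤ σ_M`, unimodality bounds `φ` by `φ γ_{b,0}` on the first piece and by `K`
on the second, which gives `c(ε) ≥ b / φ γ_{b,0} + (1 - b) / K`.
-/

theorem sub_le_mul_log_div_of_neg_mul_deriv_le {g g' : ℝ → ℝ} {a c C : ℝ} (ha : 0 < a)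
    (hac : a ≤ c) (hderiv : ∀ s ∈ Icc a c, HasDerivAt g (g' s) s)
    (hle : ∀ s ∈ Ioo a c, -s * g' s ≤ C) :
    g a - g c ≤ C * Real.log (c / a) := by
  have hpos : ∀ s ∈ Icc a c, 0 < s := fun s hs => ha.trans_le hs.1
  have hF : ∀ s ∈ Icc a c, HasDerivAt (fun s => C * Real.log s + g s) (C * s⁻¹ + g' s) s :=
    fun s hs => ((Real.hasDerivAt_log (hpos s hs).ne').const_mul C).add (hderiv s hs)
  have hmono : MonotoneOn (fun s => C * Real.log s + g s) (Icc a c) := by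
    refine monotoneOn_of_hasDerivWithinAt_nonneg (convex_Icc a c)
      (fun s hs => (hF s hs).continuousAt.continuousWithinAt)
      (fun s hs => (hF s (interior_subset hs)).hasDerivWithinAt) fun s hs => ?_
    rw [interior_Icc] at hs
    have hs0 : 0 < s := ha.trans hs.1
    have hslope : 0 ≤ (C + s * g' s) * s⁻¹ :=
      mul_nonneg (by linarith [hle s hs]) (inv_nonneg.2 hs0.le)
    rwa [add_mul, mul_comm s, mul_assoc, mul_inv_cancel₀ hs0.ne', mul_one] at hslope
  have hends := hmono (left_mem_Icc.2 hac) (right_mem_Icc.2 hac) hac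
  rw [Real.log_div (ha.trans_le hac).ne' ha.ne', mul_sub]
  linarith

theorem strictAntiOn_Ioi_of_neg_mul_deriv_pos {g g' : ℝ → ℝ}
    (hderiv : ∀ s ∈ Ioi (0 : ℝ), HasDerivAt g (g' s) s)
    (hpos : ∀ s ∈ Ioi (0 : ℝ), 0 < -s * g' s) :
    StrictAntiOn g (Ioi 0) := by
  refine strictAntiOn_of_hasDerivWithinAt_neg (convex_Ioi 0)
    (fun s hs => (hderiv s hs).continuousAt.continuousWithinAt)
    (fun s hs => (hderiv s (interior_subset hs)).hasDerivWithinAt) fun s hs => ?_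
  rw [interior_Ioi] at hs
  nlinarith [hpos s hs, mem_Ioi.1 hs]

theorem apply_le_apply_of_monotoneOn_Ioc_of_antitoneOn_Ici {f : ℝ → ℝ} {a m s : ℝ}
    (hmono : MonotoneOn f (Ioc a m)) (hanti : AntitoneOn f (Ici m)) (hm : a < m) (hs : a < s) :
    f s ≤ f m := by
  rcases le_total s m with h | h
  · exact hmono ⟨hs, h⟩ ⟨hm, le_rfl⟩ h
  · exact hanti self_mem_Ici h h

theorem add_div_le_inv_mul_log_div {g g' : ℝ → ℝ}
    (hderiv : ∀ s ∈ Ioi (0 : ℝ), HasDerivAt g (g' s) s) (hanti : StrictAntiOn g (Ioi 0))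
    {b ε γ₀ γ σ K L : ℝ} (hε : 0 < ε) (hεb : ε < b) (hb : b < 1)
    (hγ₀ : 0 < γ₀) (hγ : 0 < γ) (hσ : 0 < σ) (hgγ₀ : g γ₀ = b) (hgγ : g γ = b / (1 - ε))
    (hgσ : g σ = (b - ε) / (1 - ε)) (hK : 0 < K) (hL : 0 < L)
    (hφL : ∀ s ∈ Ioo γ γ₀, -s * g' s ≤ L) (hφK : ∀ s ∈ Ioo γ₀ σ, -s * g' s ≤ K) :
    (1 - b) / K + b / L ≤ ε⁻¹ * Real.log (σ / γ) := by
  have h1ε : 0 < 1 - ε := by linarith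
  have hγγ₀ : γ < γ₀ :=
    (hanti.lt_iff_gt hγ₀ hγ).1 (by rw [hgγ₀, hgγ, lt_div_iff₀ h1ε]; nlinarith)
  have hγ₀σ : γ₀ < σ :=
    (hanti.lt_iff_gt hσ hγ₀).1 (by rw [hgγ₀, hgσ, div_lt_iff₀ h1ε]; nlinarith)
  have first : ε * b / (1 - ε) ≤ L * Real.log (γ₀ / γ) := by
    have hdrop : g γ - g γ₀ = ε * b / (1 - ε) := by rw [hgγ, hgγ₀]; field_simp; ring
    exact hdrop ▸ sub_le_mul_log_div_of_neg_mul_deriv_le hγ hγγ₀.le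
      (fun s hs => hderiv s (hγ.trans_le hs.1)) hφL
  have second : ε * (1 - b) / (1 - ε) ≤ K * Real.log (σ / γ₀) := by
    have hdrop : g γ₀ - g σ = ε * (1 - b) / (1 - ε) := by rw [hgγ₀, hgσ]; field_simp; ring
    exact hdrop ▸ sub_le_mul_log_div_of_neg_mul_deriv_le hγ₀ hγ₀σ.le
      (fun s hs => hderiv s (hγ₀.trans_le hs.1)) hφK
  have hlog : Real.log (σ / γ) = Real.log (σ / γ₀) + Real.log (γ₀ / γ) := by
    rw [← Real.log_mul (by positivity) (by positivity), div_mul_div_cancel₀ hγ₀.ne']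
  rw [hlog, le_inv_mul_iff₀ hε]
  calc ε * ((1 - b) / K + b / L) = ε * (1 - b) / K + ε * b / L := by ring
    _ ≤ ε * (1 - b) / (1 - ε) / K + ε * b / (1 - ε) / L := by
      gcongr <;> exact le_div_self (by nlinarith) h1ε (by linarith)
    _ ≤ Real.log (σ / γ₀) + Real.log (γ₀ / γ) :=
      add_le_add ((div_le_iff₀' hK).2 second) ((div_le_iff₀' hL).2 first)

theorem stmt12_general
    (g : ℝ → ℝ)
    -- Condition (A4):
    (g' : ℝ → ℝ)
    (hg_deriv : ∀ s ∈ Set.Ioi (0 : ℝ), HasDerivAt g (g' s) s)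
    (φ : ℝ → ℝ) (hφ : ∀ s, φ s = -s * g' s)
    (hφ_pos : ∀ s ∈ Set.Ioi (0 : ℝ), 0 < φ s)
    (σM : ℝ) (hσM : 0 < σM)
    (hφ_mono : MonotoneOn φ (Set.Ioc 0 σM))
    (hφ_anti : AntitoneOn φ (Set.Ici σM))
    (K : ℝ) (hK : K = φ σM)
    (b : ℝ) (hb0 : 0 < b) (hb1 : b < 1)
    (hgσM : g σM ≤ b)
    -- σ_{b,ε} and γ_{b,ε} as functions of ε (σ_{b,0} = γ_{b,0} = g⁻¹(b)):
    (σb γb : ℝ → ℝ)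
    (hσb : ∀ ε ∈ Set.Ico (0 : ℝ) b, 0 < σb ε ∧ g (σb ε) = (b - ε) / (1 - ε))
    (hγb : ∀ ε ∈ Set.Ico (0 : ℝ) b, 0 < γb ε ∧ g (γb ε) = b / (1 - ε))
    (cfun : ℝ → ℝ)
    (hcfun : ∀ ε ∈ Set.Ioo (0 : ℝ) b, cfun ε = ε⁻¹ * Real.log (σb ε / γb ε)) :
    (∀ ε ∈ Set.Ioo (0 : ℝ) b, (1 - b) / K + b / φ (γb 0) ≤ cfun ε) ∧
      1 / K ≤ (1 - b) / K + b / φ (γb 0) ∧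
      (1 - b) / K + b / φ (γb 0) ≤ sInf (cfun '' Set.Ioo 0 b) := by
  have hK_pos : 0 < K := hK ▸ hφ_pos σM hσM
  have hφ_le_K : ∀ s ∈ Ioi (0 : ℝ), φ s ≤ K := fun s hs =>
    hK ▸ apply_le_apply_of_monotoneOn_Ioc_of_antitoneOn_Ici hφ_mono hφ_anti hσM hs
  have hanti : StrictAntiOn g (Ioi 0) :=
    strictAntiOn_Ioi_of_neg_mul_deriv_pos hg_deriv fun s hs => hφ s ▸ hφ_pos s hs
  obtain ⟨hγ₀, hgγ₀⟩ := hγb 0 ⟨le_rfl, hb0⟩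
  rw [sub_zero, div_one] at hgγ₀
  have hγ₀_le : γb 0 ≤ σM := (hanti.le_iff_ge hσM hγ₀).1 (hgγ₀ ▸ hgσM)
  have hφγ₀ : 0 < φ (γb 0) := hφ_pos _ hγ₀
  have bound : ∀ ε ∈ Ioo 0 b, (1 - b) / K + b / φ (γb 0) ≤ cfun ε := by
    rintro ε ⟨hε, hεb⟩
    obtain ⟨hσ, hgσ⟩ := hσb ε ⟨hε.le, hεb⟩
    obtain ⟨hγ, hgγ⟩ := hγb ε ⟨hε.le, hεb⟩
    rw [hcfun ε ⟨hε, hεb⟩]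
    refine add_div_le_inv_mul_log_div hg_deriv hanti hε hεb hb1 hγ₀ hγ hσ hgγ₀ hgγ hgσ hK_pos hφγ₀
      (fun s hs => ?_) fun s hs => ?_
    · rw [← hφ]
      exact hφ_mono ⟨hγ.trans hs.1, hs.2.le.trans hγ₀_le⟩ ⟨hγ₀, hγ₀_le⟩ hs.2.le
    · rw [← hφ]
      exact hφ_le_K s (hγ₀.trans hs.1)
  refine ⟨bound, ?_, le_csInf ((nonempty_Ioo.2 hb0).image cfun) (forall_mem_image.2 bound)⟩
  calc 1 / K = (1 - b) / K + b / K := by ring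
    _ ≤ (1 - b) / K + b / φ (γb 0) :=
      add_le_add_right (div_le_div_of_nonneg_left hb0.le hφγ₀ (hφ_le_K _ hγ₀)) _

/-- expression (6.28): Under (A3), (A4) and g(σ_M) ≤ b, for every
ε ∈ (0, b) one has c(ε) ≥ (1−b)/K + b/φ(γ_{b,0}) ≥ 1/K; in particular
c_o = inf{c(ε) : 0 < ε < b} ≥ (1−b)/K + b/φ(γ_{b,0}). -/
theorem stmt12 (ρ : ℝ → ℝ)
    (hρ_meas : Measurable ρ)
    (hρ_even : ∀ u, ρ (-u) = ρ u)
    (hρ_mono : MonotoneOn ρ (Set.Ici 0))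
    (hρ_zero : ρ 0 = 0)
    (hρ_bdd : ∀ u, 0 ≤ ρ u ∧ ρ u ≤ 1)
    (hρ_lim : Tendsto ρ atTop (nhds 1))
    (g : ℝ → ℝ)
    (hg : ∀ s, 0 < s → g s = ∫ z, ρ (z / s) ∂(gaussianReal 0 1))
    -- Condition (A4):
    (g' : ℝ → ℝ)
    (hg_deriv : ∀ s ∈ Set.Ioi (0 : ℝ), HasDerivAt g (g' s) s)
    (hg'_cont : ContinuousOn g' (Set.Ioi 0))
    (φ : ℝ → ℝ) (hφ : ∀ s, φ s = -s * g' s)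
    (hφ_pos : ∀ s ∈ Set.Ioi (0 : ℝ), 0 < φ s)
    (σM : ℝ) (hσM : 0 < σM)
    (hφ_mono : MonotoneOn φ (Set.Ioc 0 σM))
    (hφ_anti : AntitoneOn φ (Set.Ici σM))
    (K : ℝ) (hK : K = φ σM)
    (b : ℝ) (hb0 : 0 < b) (hb1 : b < 1)
    (hgσM : g σM ≤ b)
    -- σ_{b,ε} and γ_{b,ε} as functions of ε (σ_{b,0} = γ_{b,0} = g⁻¹(b)):
    (σb γb : ℝ → ℝ)
    (hσb : ∀ ε ∈ Set.Ico (0 : ℝ) b, 0 < σb ε ∧ g (σb ε) = (b - ε) / (1 - ε))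
    (hγb : ∀ ε ∈ Set.Ico (0 : ℝ) b, 0 < γb ε ∧ g (γb ε) = b / (1 - ε))
    (cfun : ℝ → ℝ)
    (hcfun : ∀ ε ∈ Set.Ioo (0 : ℝ) b, cfun ε = ε⁻¹ * Real.log (σb ε / γb ε)) :
    (∀ ε ∈ Set.Ioo (0 : ℝ) b, (1 - b) / K + b / φ (γb 0) ≤ cfun ε) ∧
      1 / K ≤ (1 - b) / K + b / φ (γb 0) ∧
      (1 - b) / K + b / φ (γb 0) ≤ sInf (cfun '' Set.Ioo 0 b) :=
  stmt12_general g g' hg_deriv φ hφ hφ_pos σM hσM hφ_mono hφ_anti K hK b hb0 hb1 hgσM σb γb hσb hγb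
    cfun hcfun
end

section
/- Let ρ satisfy (A3), suppose g satisfies (A4), let 0 < b < 1, and assume g(σ_M) ≤ b. If 0 < c ≤ c_o := inf{c(ε) : 0 < ε < b}, where c(ε) = ε⁻¹ log(σ_{b,ε}/γ_{b,ε}), then B_CM(ε) ≤ B_S(ε) for every ε ∈ (0, b). -/
/-!
Write `A(s) = c (1 - ε) g(s) + log s`, `r = σ_{b,0}` (so `g r = b`), `σᵤ = σ_{b,u}` and
`γᵤ = γ_{b,u}`. Since `g(γᵤ) - g(σᵤ) = u / (1 - u)`, the mean value theorem for `g` against `log` and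
`c u ≤ log (σᵤ / γᵤ)` give `c φ(ξᵤ) (1 - u) ≤ 1` for some `ξᵤ ∈ (γᵤ, σᵤ)`; letting `u → 0⁺`,
`c φ(r) ≤ 1`. As `r ≤ σ_M` and `φ` increases up to `σ_M`, `A' = (1 - c (1 - ε) φ) / s ≥ 0` on
`(0, r]`. A point `s ∈ (r, σ_ε]` is itself a level `σᵤ` with `u ≤ ε`, and
`A(γ_ε) ≤ A(γᵤ) ≤ A(σᵤ)` because `c u ≤ log (σᵤ / γᵤ)`. So `A(γ_ε)` is the minimum of `A` on
`[γ_ε, σ_ε]`, whence `D_c(ε) ≤ A(σ_ε) - A(γ_ε) = log (σ_ε / γ_ε) - c ε`, which is the claim.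
-/

open MeasureTheory ProbabilityTheory Filter Set Topology

theorem exists_mem_Ioo_sub_eq_mul_log_sub {g g' : ℝ → ℝ} {x y : ℝ} (hx : 0 < x) (hxy : x < y)
    (hg : ∀ s ∈ Icc x y, HasDerivAt g (g' s) s) :
    ∃ ξ ∈ Ioo x y, g x - g y = -ξ * g' ξ * (Real.log y - Real.log x) := by
  have hpos : ∀ s ∈ Icc x y, 0 < s := fun s hs => hx.trans_le hs.1
  obtain ⟨ξ, hξ, h⟩ := exists_ratio_hasDerivAt_eq_ratio_slope g g' hxy
    (fun s hs => (hg s hs).continuousAt.continuousWithinAt)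
    (fun s hs => hg s (Ioo_subset_Icc_self hs)) Real.log (·⁻¹)
    (fun s hs => (Real.continuousAt_log (hpos s hs).ne').continuousWithinAt)
    (fun s hs => Real.hasDerivAt_log (hpos s (Ioo_subset_Icc_self hs)).ne')
  have hξ0 : ξ ≠ 0 := (hpos ξ (Ioo_subset_Icc_self hξ)).ne'
  refine ⟨ξ, hξ, ?_⟩
  field_simp at h
  linear_combination h

theorem StrictAntiOn.tendsto_of_tendsto_comp {α : Type*} {l : Filter α} {g : ℝ → ℝ} {f : α → ℝ}
    {s : Set ℝ} {r : ℝ} (hg : StrictAntiOn g s) (hs : s ∈ 𝓝 r) (hf : ∀ᶠ x in l, f x ∈ s)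
    (h : Tendsto (g ∘ f) l (𝓝 (g r))) : Tendsto f l (𝓝 r) := by
  obtain ⟨p, q, ⟨hpr, hrq⟩, hpq⟩ := mem_nhds_iff_exists_Ioo_subset.1 hs
  refine tendsto_order.2 ⟨fun a har => ?_, fun a har => ?_⟩
  · set a' := (max a p + r) / 2
    have ha' : a' ∈ s := hpq ⟨by grind, by grind⟩
    filter_upwards [hf, (tendsto_order.1 h).2 _ (hg ha' (hpq ⟨hpr, hrq⟩) (by grind))]
      with x hxs hx
    have : a' < f x := by
      by_contra! hle
      exact (hg.le_iff_ge ha' hxs).2 hle |>.not_gt hx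
    grind
  · set a' := (min a q + r) / 2
    have ha' : a' ∈ s := hpq ⟨by grind, by grind⟩
    filter_upwards [hf, (tendsto_order.1 h).1 _ (hg (hpq ⟨hpr, hrq⟩) ha' (by grind))]
      with x hxs hx
    have : f x < a' := by
      by_contra! hle
      exact (hg.le_iff_ge hxs ha').2 hle |>.not_gt hx
    grind

theorem monotoneOn_mul_add_log {g g' : ℝ → ℝ} {a r : ℝ}
    (hg : ∀ s ∈ Ioc 0 r, HasDerivAt g (g' s) s) (h : ∀ s ∈ Ioo 0 r, a * (-s * g' s) ≤ 1) :
    MonotoneOn (fun s => a * g s + Real.log s) (Ioc 0 r) := by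
  have hderiv : ∀ s ∈ Ioc 0 r, HasDerivAt (fun s => a * g s + Real.log s) (a * g' s + s⁻¹) s :=
    fun s hs => ((hg s hs).const_mul a).add (Real.hasDerivAt_log hs.1.ne')
  refine monotoneOn_of_hasDerivWithinAt_nonneg (f' := fun s => a * g' s + s⁻¹) (convex_Ioc 0 r)
    (fun s hs => (hderiv s hs).continuousAt.continuousWithinAt) (fun s hs => ?_) (fun s hs => ?_)
  <;> rw [interior_Ioc] at hs
  · exact (hderiv s (Ioo_subset_Ioc_self hs)).hasDerivWithinAt
  · have hs0 : 0 < s := hs.1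
    have : a * g' s + s⁻¹ = (1 - a * (-s * g' s)) / s := by field_simp; ring
    rw [this]
    exact div_nonneg (sub_nonneg.2 (h s hs)) hs0.le

theorem sInf_image_Ici_sub_sInf_image_Ici_le {A : ℝ → ℝ} {γ σ : ℝ} (hγσ : γ ≤ σ)
    (hbdd : BddBelow (A '' Ici σ)) (hmin : ∀ s ∈ Icc γ σ, A γ ≤ A s) :
    sInf (A '' Ici σ) - sInf (A '' Ici γ) ≤ A σ - A γ := by
  have hσ : sInf (A '' Ici σ) ≤ A σ := csInf_le hbdd (mem_image_of_mem A self_mem_Ici)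
  have hγ : min (A γ) (sInf (A '' Ici σ)) ≤ sInf (A '' Ici γ) := by
    refine le_csInf (image_nonempty.2 nonempty_Ici) ?_
    rintro _ ⟨s, hs, rfl⟩
    rcases le_or_gt s σ with hsσ | hσs
    · exact (min_le_left _ _).trans (hmin s ⟨hs, hsσ⟩)
    · exact (min_le_right _ _).trans (csInf_le hbdd (mem_image_of_mem A hσs.le))
  have := hmin σ ⟨hγσ, le_rfl⟩
  grind

theorem strictAntiOn_of_neg_mul_deriv_pos {g g' : ℝ → ℝ}
    (hg : ∀ s ∈ Ioi (0 : ℝ), HasDerivAt g (g' s) s) (hφ : ∀ s ∈ Ioi (0 : ℝ), 0 < -s * g' s) :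
    StrictAntiOn g (Ioi 0) := by
  refine strictAntiOn_of_hasDerivWithinAt_neg (f' := g') (convex_Ioi 0)
    (fun s hs => (hg s hs).continuousAt.continuousWithinAt) (fun s hs => ?_) (fun s hs => ?_)
  <;> rw [interior_Ioi] at hs
  · exact (hg s hs).hasDerivWithinAt
  · have hs0 : 0 < s := hs
    nlinarith [hφ s hs]

theorem mul_le_log_div_of_le_sInf {σb γb cfun : ℝ → ℝ} {b c : ℝ}
    (hlt : ∀ u ∈ Ioo 0 b, 0 < γb u ∧ γb u < σb u)
    (hcfun : ∀ u ∈ Ioo 0 b, cfun u = u⁻¹ * Real.log (σb u / γb u))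
    (hc : c ≤ sInf (cfun '' Ioo 0 b)) :
    ∀ u ∈ Ioo 0 b, c * u ≤ Real.log (σb u / γb u) := by
  have hbdd : BddBelow (cfun '' Ioo 0 b) := by
    refine ⟨0, ?_⟩
    rintro _ ⟨u, hu, rfl⟩
    rw [hcfun u hu]
    exact mul_nonneg (inv_nonneg.2 hu.1.le)
      (Real.log_nonneg ((one_le_div (hlt u hu).1).2 (hlt u hu).2.le))
  intro u hu
  have := hc.trans (csInf_le hbdd (mem_image_of_mem cfun hu))
  rwa [hcfun u hu, inv_mul_eq_div, le_div_iff₀ hu.1] at this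

section Levels

variable {g g' σb γb : ℝ → ℝ} {b c r : ℝ}

theorem levels_lt (hg : StrictAntiOn g (Ioi 0)) (hb1 : b < 1) (hr : 0 < r) (hgr : g r = b)
    (hσ : ∀ u ∈ Ioo 0 b, 0 < σb u ∧ g (σb u) = (b - u) / (1 - u))
    (hγ : ∀ u ∈ Ioo 0 b, 0 < γb u ∧ g (γb u) = b / (1 - u)) {u : ℝ} (hu : u ∈ Ioo 0 b) :
    γb u < r ∧ r < σb u := by
  obtain ⟨hσ0, hgσ⟩ := hσ u hu
  obtain ⟨hγ0, hgγ⟩ := hγ u hu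
  have h1u : 0 < 1 - u := by linarith [hu.2]
  constructor
  · refine (hg.lt_iff_gt hr hγ0).1 ?_
    rw [hgr, hgγ, lt_div_iff₀ h1u]
    nlinarith [mul_pos hu.1 (hu.1.trans hu.2)]
  · refine (hg.lt_iff_gt hσ0 hr).1 ?_
    rw [hgr, hgσ, div_lt_iff₀ h1u]
    nlinarith [hu.1]

theorem exists_mem_Ioo_levels_mul_le_one (hg : ∀ s ∈ Ioi 0, HasDerivAt g (g' s) s)
    (hφ : ∀ s ∈ Ioi 0, 0 < -s * g' s) (hb1 : b < 1) (hr : 0 < r) (hgr : g r = b)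
    (hσ : ∀ u ∈ Ioo 0 b, 0 < σb u ∧ g (σb u) = (b - u) / (1 - u))
    (hγ : ∀ u ∈ Ioo 0 b, 0 < γb u ∧ g (γb u) = b / (1 - u))
    (hc : ∀ u ∈ Ioo 0 b, c * u ≤ Real.log (σb u / γb u)) {u : ℝ} (hu : u ∈ Ioo 0 b) :
    ∃ ξ ∈ Ioo (γb u) (σb u), c * (-ξ * g' ξ) * (1 - u) ≤ 1 := by
  obtain ⟨hγr, hrσ⟩ := levels_lt (strictAntiOn_of_neg_mul_deriv_pos hg hφ) hb1 hr hgr hσ hγ hu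
  obtain ⟨hσ0, hgσ⟩ := hσ u hu
  obtain ⟨hγ0, hgγ⟩ := hγ u hu
  obtain ⟨ξ, hξ, hmvt⟩ := exists_mem_Ioo_sub_eq_mul_log_sub hγ0 (hγr.trans hrσ)
    (fun s hs => hg s (hγ0.trans_le hs.1))
  refine ⟨ξ, hξ, ?_⟩
  have h1u : 0 < 1 - u := by linarith [hu.2]
  have hgap : g (γb u) - g (σb u) = u / (1 - u) := by
    rw [hgγ, hgσ]
    field_simp
    ring
  have hcu := mul_le_mul_of_nonneg_left (hc u hu) (hφ ξ (hγ0.trans hξ.1)).le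
  rw [Real.log_div hσ0.ne' hγ0.ne', ← hmvt, hgap, le_div_iff₀ h1u] at hcu
  exact le_of_mul_le_mul_right (by linarith) hu.1

theorem tendsto_level_nhdsGT_zero {f F : ℝ → ℝ} (hg : StrictAntiOn g (Ioi 0)) (hb0 : 0 < b)
    (hr : 0 < r) (hgr : g r = b) (hf : ∀ u ∈ Ioo 0 b, 0 < f u ∧ g (f u) = F u)
    (hF : ContinuousAt F 0) (hF0 : F 0 = b) : Tendsto f (𝓝[>] 0) (𝓝 r) := by
  have hev : ∀ᶠ u in 𝓝[>] (0 : ℝ), u ∈ Ioo 0 b := Ioo_mem_nhdsGT hb0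
  refine hg.tendsto_of_tendsto_comp (Ioi_mem_nhds hr) (hev.mono fun u hu => (hf u hu).1) ?_
  rw [hgr, ← hF0]
  exact (hF.tendsto.mono_left nhdsWithin_le_nhds).congr' (hev.mono fun u hu => (hf u hu).2.symm)

theorem mul_neg_mul_deriv_le_one (hg : ∀ s ∈ Ioi 0, HasDerivAt g (g' s) s)
    (hg' : ContinuousAt g' r) (hφ : ∀ s ∈ Ioi 0, 0 < -s * g' s) (hb0 : 0 < b) (hb1 : b < 1)
    (hr : 0 < r) (hgr : g r = b)
    (hσ : ∀ u ∈ Ioo 0 b, 0 < σb u ∧ g (σb u) = (b - u) / (1 - u))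
    (hγ : ∀ u ∈ Ioo 0 b, 0 < γb u ∧ g (γb u) = b / (1 - u))
    (hc : ∀ u ∈ Ioo 0 b, c * u ≤ Real.log (σb u / γb u)) :
    c * (-r * g' r) ≤ 1 := by
  have hanti := strictAntiOn_of_neg_mul_deriv_pos hg hφ
  choose! ξ hξmem hξle using fun u (hu : u ∈ Ioo 0 b) =>
    exists_mem_Ioo_levels_mul_le_one hg hφ hb1 hr hgr hσ hγ hc hu
  have hev : ∀ᶠ u in 𝓝[>] (0 : ℝ), u ∈ Ioo 0 b := Ioo_mem_nhdsGT hb0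
  have hξlim : Tendsto ξ (𝓝[>] 0) (𝓝 r) :=
    tendsto_of_tendsto_of_tendsto_of_le_of_le'
      (tendsto_level_nhdsGT_zero hanti hb0 hr hgr hγ (by fun_prop (disch := norm_num)) (by simp))
      (tendsto_level_nhdsGT_zero hanti hb0 hr hgr hσ (by fun_prop (disch := norm_num)) (by simp))
      (hev.mono fun u hu => (hξmem u hu).1.le) (hev.mono fun u hu => (hξmem u hu).2.le)
  have hφr : ContinuousAt (fun s => c * (-s * g' s)) r := by fun_prop
  have hlim : Tendsto (fun u => c * (-ξ u * g' (ξ u)) * (1 - u)) (𝓝[>] 0)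
      (𝓝 (c * (-r * g' r) * (1 - 0))) :=
    (hφr.tendsto.comp hξlim).mul ((continuous_const.sub continuous_id).tendsto 0 |>.mono_left
      nhdsWithin_le_nhds)
  simpa using le_of_tendsto hlim (hev.mono fun u hu => hξle u hu)

theorem exists_level_eq {ε s : ℝ} (hg : StrictAntiOn g (Ioi 0)) (hb1 : b < 1) (hr : 0 < r)
    (hgr : g r = b) (hσ : ∀ u ∈ Ioo 0 b, 0 < σb u ∧ g (σb u) = (b - u) / (1 - u))
    (hε : ε ∈ Ioo 0 b) (hrs : r < s) (hsσ : s ≤ σb ε) :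
    ∃ u ∈ Ioo 0 b, u ≤ ε ∧ σb u = s := by
  obtain ⟨hσ0, hgσ⟩ := hσ ε hε
  have hs0 : 0 < s := hr.trans hrs
  have hgsb : g s < b := hgr ▸ hg hr hs0 hrs
  have hgs : (b - ε) / (1 - ε) ≤ g s := hgσ ▸ (hg.le_iff_ge hσ0 hs0).2 hsσ
  have h1ε : 0 < 1 - ε := by linarith [hε.2]
  have h1g : 0 < 1 - g s := by linarith
  set u := (b - g s) / (1 - g s) with hu_def
  have huε : u ≤ ε := by
    rw [div_le_iff₀ h1g]
    rw [div_le_iff₀ h1ε] at hgs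
    nlinarith
  have hu : u ∈ Ioo 0 b := ⟨div_pos (by linarith) h1g, huε.trans_lt hε.2⟩
  obtain ⟨hσu0, hgσu⟩ := hσ u hu
  have h1u : 0 < 1 - u := by linarith [hu.2]
  refine ⟨u, hu, huε, (hg.eq_iff_eq hs0 hσu0).1 ?_⟩
  rw [hgσu, eq_div_iff h1u.ne', hu_def]
  field_simp
  ring

theorem mul_add_log_levels_le {ε u : ℝ}
    (hσ : ∀ u ∈ Ioo 0 b, 0 < σb u ∧ g (σb u) = (b - u) / (1 - u))
    (hγ : ∀ u ∈ Ioo 0 b, 0 < γb u ∧ g (γb u) = b / (1 - u))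
    (hc : ∀ u ∈ Ioo 0 b, c * u ≤ Real.log (σb u / γb u)) (hc0 : 0 ≤ c) (hb1 : b < 1)
    (hu : u ∈ Ioo 0 b) (huε : u ≤ ε) :
    c * (1 - ε) * g (γb u) + Real.log (γb u) ≤ c * (1 - ε) * g (σb u) + Real.log (σb u) := by
  obtain ⟨hσu0, hgσu⟩ := hσ u hu
  obtain ⟨hγu0, hgγu⟩ := hγ u hu
  have h1u : 0 < 1 - u := by linarith [hu.2]
  have h : (1 - ε) * (u / (1 - u)) ≤ u := by
    rw [mul_div_assoc', div_le_iff₀ h1u]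
    nlinarith [hu.1]
  have hdiff : c * (1 - ε) * g (γb u) - c * (1 - ε) * g (σb u) = c * ((1 - ε) * (u / (1 - u))) := by
    rw [hgγu, hgσu]
    field_simp
    ring
  have hlog := hc u hu
  rw [Real.log_div hσu0.ne' hγu0.ne'] at hlog
  linarith [mul_le_mul_of_nonneg_left h hc0]

theorem mul_add_log_le_of_mem_Icc_levels {ε : ℝ} (hg : StrictAntiOn g (Ioi 0)) (hb1 : b < 1)
    (hr : 0 < r) (hgr : g r = b)
    (hσ : ∀ u ∈ Ioo 0 b, 0 < σb u ∧ g (σb u) = (b - u) / (1 - u))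
    (hγ : ∀ u ∈ Ioo 0 b, 0 < γb u ∧ g (γb u) = b / (1 - u))
    (hc : ∀ u ∈ Ioo 0 b, c * u ≤ Real.log (σb u / γb u)) (hc0 : 0 ≤ c) (hε : ε ∈ Ioo 0 b)
    (hmono : MonotoneOn (fun s => c * (1 - ε) * g s + Real.log s) (Ioc 0 r)) :
    ∀ s ∈ Icc (γb ε) (σb ε),
      c * (1 - ε) * g (γb ε) + Real.log (γb ε) ≤ c * (1 - ε) * g s + Real.log s := by
  rintro s ⟨hγs, hsσ⟩
  have hγ0 := (hγ ε hε).1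
  have hγr := (levels_lt hg hb1 hr hgr hσ hγ hε).1
  rcases le_or_gt s r with hsr | hrs
  · exact hmono ⟨hγ0, hγr.le⟩ ⟨hγ0.trans_le hγs, hsr⟩ hγs
  obtain ⟨u, hu, huε, rfl⟩ := exists_level_eq hg hb1 hr hgr hσ hε hrs hsσ
  have hγεu : γb ε ≤ γb u := by
    refine (hg.le_iff_ge (hγ u hu).1 hγ0).1 ?_
    rw [(hγ u hu).2, (hγ ε hε).2]
    have h1ε : 0 < 1 - ε := by linarith [hε.2]
    gcongr
    linarith [hu.1.trans hu.2]
  calc c * (1 - ε) * g (γb ε) + Real.log (γb ε)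
      ≤ c * (1 - ε) * g (γb u) + Real.log (γb u) :=
        hmono ⟨hγ0, hγr.le⟩ ⟨(hγ u hu).1, (levels_lt hg hb1 hr hgr hσ hγ hu).1.le⟩ hγεu
    _ ≤ _ := mul_add_log_levels_le hσ hγ hc hc0 hb1 hu huε

theorem sInf_mul_add_log_levels_sub_le {ε : ℝ} (hg : StrictAntiOn g (Ioi 0))
    (hg0 : ∀ s ∈ Ioi 0, 0 ≤ g s) (hb1 : b < 1) (hr : 0 < r) (hgr : g r = b)
    (hσ : ∀ u ∈ Ioo 0 b, 0 < σb u ∧ g (σb u) = (b - u) / (1 - u))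
    (hγ : ∀ u ∈ Ioo 0 b, 0 < γb u ∧ g (γb u) = b / (1 - u))
    (hc : ∀ u ∈ Ioo 0 b, c * u ≤ Real.log (σb u / γb u)) (hc0 : 0 ≤ c) (hε : ε ∈ Ioo 0 b)
    (hmono : MonotoneOn (fun s => c * (1 - ε) * g s + Real.log s) (Ioc 0 r)) :
    sInf ((fun s => c * (1 - ε) * g s + Real.log s) '' Ici (σb ε)) -
      sInf ((fun s => c * (1 - ε) * g s + Real.log s) '' Ici (γb ε)) ≤
      Real.log (σb ε / γb ε) - c * ε := by
  obtain ⟨hσ0, hgσ⟩ := hσ ε hε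
  obtain ⟨hγ0, hgγ⟩ := hγ ε hε
  have h1ε : 0 < 1 - ε := by linarith [hε.2]
  have hbdd : BddBelow ((fun s => c * (1 - ε) * g s + Real.log s) '' Ici (σb ε)) := by
    refine ⟨Real.log (σb ε), ?_⟩
    rintro _ ⟨s, hs, rfl⟩
    have hgs := mul_nonneg (mul_nonneg hc0 h1ε.le) (hg0 s (hσ0.trans_le hs))
    linarith [Real.log_le_log hσ0 hs]
  obtain ⟨hγr, hrσ⟩ := levels_lt hg hb1 hr hgr hσ hγ hε
  refine (sInf_image_Ici_sub_sInf_image_Ici_le (hγr.trans hrσ).le hbdd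
    (mul_add_log_le_of_mem_Icc_levels hg hb1 hr hgr hσ hγ hc hc0 hε hmono)).trans (le_of_eq ?_)
  rw [hgσ, hgγ, Real.log_div hσ0.ne' hγ0.ne']
  field_simp
  ring

end Levels

theorem sqrt_exp_two_mul_sub_one_le {x y : ℝ} (hy : 0 < y) (h : x ≤ Real.log y) :
    √(Real.exp (2 * x) - 1) ≤ √(y ^ 2 - 1) := by
  gcongr
  calc Real.exp (2 * x) ≤ Real.exp (2 * Real.log y) := by gcongr
    _ = y ^ 2 := by rw [two_mul, Real.exp_add, Real.exp_log hy, sq]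

theorem stmt15_general (ρ : ℝ → ℝ)
    (hρ_bdd : ∀ u, 0 ≤ ρ u ∧ ρ u ≤ 1)
    (g : ℝ → ℝ)
    (hg : ∀ s, 0 < s → g s = ∫ z, ρ (z / s) ∂(gaussianReal 0 1))
    -- Condition (A4):
    (g' : ℝ → ℝ)
    (hg_deriv : ∀ s ∈ Set.Ioi (0 : ℝ), HasDerivAt g (g' s) s)
    (hg'_cont : ContinuousOn g' (Set.Ioi 0))
    (φ : ℝ → ℝ) (hφ : ∀ s, φ s = -s * g' s)
    (hφ_pos : ∀ s ∈ Set.Ioi (0 : ℝ), 0 < φ s)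
    (σM : ℝ) (hσM : 0 < σM)
    (hφ_mono : MonotoneOn φ (Set.Ioc 0 σM))
    (b : ℝ) (hb0 : 0 < b) (hb1 : b < 1)
    (hgσM : g σM ≤ b)
    (σb γb : ℝ → ℝ)
    (hσb : ∀ ε ∈ Set.Ico (0 : ℝ) b, 0 < σb ε ∧ g (σb ε) = (b - ε) / (1 - ε))
    (hγb : ∀ ε ∈ Set.Ico (0 : ℝ) b, 0 < γb ε ∧ g (γb ε) = b / (1 - ε))
    (cfun : ℝ → ℝ)
    (hcfun : ∀ ε ∈ Set.Ioo (0 : ℝ) b, cfun ε = ε⁻¹ * Real.log (σb ε / γb ε))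
    (c : ℝ) (hc0 : 0 < c) (hcco : c ≤ sInf (cfun '' Set.Ioo 0 b))
    (A : ℝ → ℝ → ℝ) (hA : ∀ ε s, A ε s = c * (1 - ε) * g s + Real.log s)
    (D : ℝ → ℝ)
    (hD : ∀ ε, D ε = sInf (A ε '' Set.Ici (σb ε)) - sInf (A ε '' Set.Ici (γb ε)))
    (BS : ℝ → ℝ) (hBS : ∀ ε, BS ε = Real.sqrt ((σb ε / γb ε) ^ 2 - 1))
    (BCM : ℝ → ℝ)
    (hBCM : ∀ ε, BCM ε = Real.sqrt (Real.exp (2 * c * ε + 2 * D ε) - 1)) :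
    ∀ ε ∈ Set.Ioo (0 : ℝ) b, BCM ε ≤ BS ε := by
  intro ε hε
  have hφ' : ∀ s ∈ Ioi (0 : ℝ), 0 < -s * g' s := fun s hs => hφ s ▸ hφ_pos s hs
  have hanti := strictAntiOn_of_neg_mul_deriv_pos hg_deriv hφ'
  have hg0 : ∀ s ∈ Ioi (0 : ℝ), 0 ≤ g s := fun s hs =>
    hg s hs ▸ integral_nonneg fun z => (hρ_bdd _).1
  obtain ⟨hr, hgr⟩ := hσb 0 ⟨le_rfl, hb0⟩
  rw [sub_zero, sub_zero, div_one] at hgr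
  have hσ := fun u (hu : u ∈ Ioo 0 b) => hσb u (Ioo_subset_Ico_self hu)
  have hγ := fun u (hu : u ∈ Ioo 0 b) => hγb u (Ioo_subset_Ico_self hu)
  have hlt := fun u (hu : u ∈ Ioo 0 b) => levels_lt hanti hb1 hr hgr hσ hγ hu
  have hc := mul_le_log_div_of_le_sInf
    (fun u hu => ⟨(hγ u hu).1, (hlt u hu).1.trans (hlt u hu).2⟩) hcfun hcco
  have hcφ : c * φ (σb 0) ≤ 1 := hφ _ ▸ mul_neg_mul_deriv_le_one hg_deriv
    (hg'_cont.continuousAt (Ioi_mem_nhds hr)) hφ' hb0 hb1 hr hgr hσ hγ hc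
  have hrσM : σb 0 ≤ σM := (hanti.le_iff_ge hσM hr).1 (hgr ▸ hgσM)
  have hmono : MonotoneOn (fun s => c * (1 - ε) * g s + Real.log s) (Ioc 0 (σb 0)) := by
    refine monotoneOn_mul_add_log (fun s hs => hg_deriv s hs.1) fun s hs => ?_
    have hφs : φ s ≤ φ (σb 0) := hφ_mono ⟨hs.1, hs.2.le.trans hrσM⟩ ⟨hr, hrσM⟩ hs.2.le
    rw [← hφ]
    nlinarith [mul_pos (mul_pos hc0 hε.1) (hφ_pos s hs.1), mul_le_mul_of_nonneg_left hφs hc0.le]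
  have hDle : D ε ≤ Real.log (σb ε / γb ε) - c * ε := by
    rw [hD, show A ε = _ from funext (hA ε)]
    exact sInf_mul_add_log_levels_sub_le hanti hg0 hb1 hr hgr hσ hγ hc hc0.le hε hmono
  rw [hBCM, hBS, mul_assoc, ← mul_add]
  exact sqrt_exp_two_mul_sub_one_le (div_pos (hσ ε hε).1 (hγ ε hε).1) (by linarith)

/-- Theorem 6.2: Under (A3), (A4) and g(σ_M) ≤ b, if
0 < c ≤ c_o = inf{c(ε) : 0 < ε < b}, then B_CM(ε) ≤ B_S(ε) for every ε ∈ (0, b). -/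
theorem stmt15 (ρ : ℝ → ℝ)
    (hρ_meas : Measurable ρ)
    (hρ_even : ∀ u, ρ (-u) = ρ u)
    (hρ_mono : MonotoneOn ρ (Set.Ici 0))
    (hρ_zero : ρ 0 = 0)
    (hρ_bdd : ∀ u, 0 ≤ ρ u ∧ ρ u ≤ 1)
    (hρ_lim : Tendsto ρ atTop (nhds 1))
    (g : ℝ → ℝ)
    (hg : ∀ s, 0 < s → g s = ∫ z, ρ (z / s) ∂(gaussianReal 0 1))
    -- Condition (A4):
    (g' : ℝ → ℝ)
    (hg_deriv : ∀ s ∈ Set.Ioi (0 : ℝ), HasDerivAt g (g' s) s)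
    (hg'_cont : ContinuousOn g' (Set.Ioi 0))
    (φ : ℝ → ℝ) (hφ : ∀ s, φ s = -s * g' s)
    (hφ_pos : ∀ s ∈ Set.Ioi (0 : ℝ), 0 < φ s)
    (σM : ℝ) (hσM : 0 < σM)
    (hφ_mono : MonotoneOn φ (Set.Ioc 0 σM))
    (hφ_anti : AntitoneOn φ (Set.Ici σM))
    (b : ℝ) (hb0 : 0 < b) (hb1 : b < 1)
    (hgσM : g σM ≤ b)
    (σb γb : ℝ → ℝ)
    (hσb : ∀ ε ∈ Set.Ico (0 : ℝ) b, 0 < σb ε ∧ g (σb ε) = (b - ε) / (1 - ε))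
    (hγb : ∀ ε ∈ Set.Ico (0 : ℝ) b, 0 < γb ε ∧ g (γb ε) = b / (1 - ε))
    (cfun : ℝ → ℝ)
    (hcfun : ∀ ε ∈ Set.Ioo (0 : ℝ) b, cfun ε = ε⁻¹ * Real.log (σb ε / γb ε))
    (c : ℝ) (hc0 : 0 < c) (hcco : c ≤ sInf (cfun '' Set.Ioo 0 b))
    (A : ℝ → ℝ → ℝ) (hA : ∀ ε s, A ε s = c * (1 - ε) * g s + Real.log s)
    (D : ℝ → ℝ)
    (hD : ∀ ε, D ε = sInf (A ε '' Set.Ici (σb ε)) - sInf (A ε '' Set.Ici (γb ε)))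
    (BS : ℝ → ℝ) (hBS : ∀ ε, BS ε = Real.sqrt ((σb ε / γb ε) ^ 2 - 1))
    (BCM : ℝ → ℝ)
    (hBCM : ∀ ε, BCM ε = Real.sqrt (Real.exp (2 * c * ε + 2 * D ε) - 1)) :
    ∀ ε ∈ Set.Ioo (0 : ℝ) b, BCM ε ≤ BS ε :=
  stmt15_general ρ hρ_bdd g hg g' hg_deriv hg'_cont φ hφ hφ_pos σM hσM hφ_mono b hb0 hb1 hgσM σb γb
    hσb hγb cfun hcfun c hc0 hcco A hA D hD BS hBS BCM hBCM
end
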